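/- For fixed positive reals n and s, the third derivative of h(u) = u·[ψ(n+s+1) − ψ((n+s)u+1)] is positive on (0,1], i.e., h''' > 0, so h'' is monotone increasing. -/
import Mathlib


/-- The second derivative of the digamma function,
`ψ''(z) = −2 Σ_{k≥0} 1/(z+k)³`. -/
noncomputable def psiSecond (z : ℝ) : ℝ := -2 * ∑' k : ℕ, 1 / (z + k) ^ 3

/-- The third derivative of the digamma function,
`ψ'''(z) = 6 Σ_{k≥0} 1/(z+k)⁴`. -/
noncomputable def psiThird (z : ℝ) : ℝ := 6 * ∑' k : ℕ, 1 / (z + k) ^ 4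

lemma summable_shift_pow (z : ℝ) (hz : 1 ≤ z) (p : ℕ) (hp : 2 ≤ p) :
    Summable (fun k : ℕ => 1 / (z + k) ^ p) := by
  have hbase : Summable (fun k : ℕ => 1 / ((k : ℝ) + 1) ^ p) := by
    have h := (summable_nat_add_iff (f := fun n : ℕ => 1 / (n : ℝ) ^ p) 1).2
      (Real.summable_one_div_nat_pow.2 (by omega))
    exact h.congr (by intro k; push_cast; ring_nf)
  refine Summable.of_nonneg_of_le (fun k => by positivity) (fun k => ?_) hbase
  have hk : (0:ℝ) < (k : ℝ) + 1 := by positivity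
  have hpow : ((k:ℝ) + 1) ^ p ≤ (z + k) ^ p :=
    pow_le_pow_left₀ hk.le (by linarith) p
  exact one_div_le_one_div_of_le (by positivity) hpow

lemma summable_kshift (z : ℝ) (hz : 1 ≤ z) :
    Summable (fun k : ℕ => ((k : ℝ) + 1) / (z + k) ^ 3) := by
  refine Summable.of_nonneg_of_le (fun k => by positivity) (fun k => ?_)
    (summable_shift_pow z hz 2 le_rfl)
  have hzk : (0:ℝ) < z + k := by positivity
  rw [div_le_div_iff₀ (by positivity) (by positivity)]
  nlinarith [mul_le_mul_of_nonneg_right (show ((k:ℝ)+1) ≤ z + k by linarith)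
    (sq_nonneg (z + (k:ℝ)))]

/-- `h''` as a single series. -/
lemma hpp_eq (a u : ℝ) (ha : 0 < a) (hu : 0 < u) :
    -2 * a * (∑' k : ℕ, 1 / (a * u + 1 + k) ^ 2)
      - u * a ^ 2 * psiSecond (a * u + 1)
      = ∑' k : ℕ, (-2 * a * ((k : ℝ) + 1) / (a * u + 1 + k) ^ 3) := by
  set z : ℝ := a * u + 1 with hzdef
  have hz : 1 ≤ z := by nlinarith
  have h2 : Summable (fun k : ℕ => 1 / (z + k) ^ 2) := summable_shift_pow z hz 2 le_rfl
  have h3 : Summable (fun k : ℕ => 1 / (z + k) ^ 3) := summable_shift_pow z hz 3 (by norm_num)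
  rw [psiSecond]
  have heq : -2 * a * (∑' k : ℕ, 1 / (z + k) ^ 2) - u * a ^ 2 * (-2 * ∑' k : ℕ, 1 / (z + k) ^ 3)
      = (∑' k : ℕ, (-2 * a) * (1 / (z + k) ^ 2)) + ∑' k : ℕ, (2 * u * a ^ 2) * (1 / (z + k) ^ 3) := by
    rw [tsum_mul_left, tsum_mul_left]; ring
  rw [heq, ← Summable.tsum_add (h2.mul_left _) (h3.mul_left _)]
  refine tsum_congr fun k => ?_
  have hzk : (0:ℝ) < z + k := by positivity
  have hne : z + (k:ℝ) ≠ 0 := ne_of_gt hzk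
  have hq : a * u = z - 1 := by rw [hzdef]; ring
  field_simp
  linear_combination (2 * a * (z + (k:ℝ)) ^ 5) * hq

/-- For fixed reals `n ≥ 0` and `s > 0`, the third derivative of
`h(u) = u·[ψ(n+s+1) − ψ((n+s)u+1)]`, namely
`h'''(u) = −3(n+s)²ψ''((n+s)u+1) − u(n+s)³ψ'''((n+s)u+1)`, is positive on `(0,1]`;
hence `h''(u) = −2(n+s)ψ'((n+s)u+1) − u(n+s)²ψ''((n+s)u+1)` is monotone
(strictly) increasing on `(0,1]`. -/
theorem h_third_deriv_pos (n s : ℝ) (hn : 0 ≤ n) (hs : 0 < s) :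
    (∀ u ∈ Set.Ioc (0 : ℝ) 1,
      0 < -3 * (n + s) ^ 2 * psiSecond ((n + s) * u + 1)
        - u * (n + s) ^ 3 * psiThird ((n + s) * u + 1)) ∧
    StrictMonoOn (fun u : ℝ =>
      -2 * (n + s) * (∑' k : ℕ, 1 / ((n + s) * u + 1 + k) ^ 2)
        - u * (n + s) ^ 2 * psiSecond ((n + s) * u + 1)) (Set.Ioc (0 : ℝ) 1) := by
  set a : ℝ := n + s with hadef
  have ha : 0 < a := by positivity
  constructor
  · rintro u ⟨hu0, hu1⟩
    set z : ℝ := a * u + 1 with hzdef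
    have hz : 1 ≤ z := by nlinarith
    have hua : u * a < z := by rw [hzdef]; nlinarith
    have h3 : Summable (fun k : ℕ => 1 / (z + k) ^ 3) := summable_shift_pow z hz 3 (by norm_num)
    have h4 : Summable (fun k : ℕ => 1 / (z + k) ^ 4) := summable_shift_pow z hz 4 (by norm_num)
    have key : u * a * (∑' k : ℕ, 1 / (z + k) ^ 4) < ∑' k : ℕ, 1 / (z + k) ^ 3 := by
      rw [← tsum_mul_left]
      refine Summable.tsum_lt_tsum (i := 0) (fun k => ?_) ?_ (h4.mul_left _) h3
      · have hzk : (0:ℝ) < z + k := by positivity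
        have e : (z + (k:ℝ)) * (1 / (z + k) ^ 4) = 1 / (z + k) ^ 3 := by
          field_simp
        calc u * a * (1 / (z + (k:ℝ)) ^ 4) ≤ (z + k) * (1 / (z + k) ^ 4) := by
              apply mul_le_mul_of_nonneg_right _ (by positivity)
              have : (0:ℝ) ≤ (k:ℝ) := Nat.cast_nonneg k
              linarith
          _ = 1 / (z + k) ^ 3 := e
      · have hzk : (0:ℝ) < z + ((0:ℕ):ℝ) := by push_cast; linarith
        have e : (z + ((0:ℕ):ℝ)) * (1 / (z + ((0:ℕ):ℝ)) ^ 4) = 1 / (z + ((0:ℕ):ℝ)) ^ 3 := by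
          field_simp
        calc u * a * (1 / (z + ((0:ℕ):ℝ)) ^ 4)
            < (z + ((0:ℕ):ℝ)) * (1 / (z + ((0:ℕ):ℝ)) ^ 4) := by
              apply mul_lt_mul_of_pos_right _ (by positivity)
              push_cast; linarith
          _ = 1 / (z + ((0:ℕ):ℝ)) ^ 3 := e
    rw [psiSecond, psiThird]
    nlinarith [mul_lt_mul_of_pos_left key (show (0:ℝ) < 6 * a ^ 2 by positivity)]
  · rintro u ⟨hu0, hu1⟩ v ⟨hv0, hv1⟩ huv
    simp only
    rw [hpp_eq a u ha hu0, hpp_eq a v ha hv0]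
    have hzu : (1:ℝ) ≤ a * u + 1 := by nlinarith
    have hzv : (1:ℝ) ≤ a * v + 1 := by nlinarith
    have hsu : Summable (fun k : ℕ => ((k:ℝ)+1) / (a * u + 1 + k) ^ 3) := summable_kshift _ hzu
    have hsv : Summable (fun k : ℕ => ((k:ℝ)+1) / (a * v + 1 + k) ^ 3) := summable_kshift _ hzv
    have term : ∀ k : ℕ, -2 * a * ((k : ℝ) + 1) / (a * u + 1 + k) ^ 3
        ≤ -2 * a * ((k : ℝ) + 1) / (a * v + 1 + k) ^ 3 := by
      intro k
      have h1 : (0:ℝ) < a * u + 1 + k := by positivity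
      have h2 : (0:ℝ) < a * v + 1 + k := by positivity
      have hpow : (a * u + 1 + (k:ℝ)) ^ 3 ≤ (a * v + 1 + k) ^ 3 :=
        pow_le_pow_left₀ h1.le (by nlinarith) 3
      have h1d : 1 / (a * v + 1 + (k:ℝ)) ^ 3 ≤ 1 / (a * u + 1 + k) ^ 3 :=
        one_div_le_one_div_of_le (by positivity) hpow
      have hmul := mul_le_mul_of_nonpos_left h1d (show -2 * a * ((k:ℝ)+1) ≤ 0 by nlinarith [mul_pos ha (show (0:ℝ) < (k:ℝ)+1 by positivity)])
      calc -2 * a * ((k : ℝ) + 1) / (a * u + 1 + k) ^ 3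
          = -2 * a * ((k:ℝ)+1) * (1 / (a * u + 1 + k) ^ 3) := by ring
        _ ≤ -2 * a * ((k:ℝ)+1) * (1 / (a * v + 1 + k) ^ 3) := hmul
        _ = -2 * a * ((k : ℝ) + 1) / (a * v + 1 + k) ^ 3 := by ring
    have strict : -2 * a * (((0:ℕ) : ℝ) + 1) / (a * u + 1 + ((0:ℕ):ℝ)) ^ 3
        < -2 * a * (((0:ℕ) : ℝ) + 1) / (a * v + 1 + ((0:ℕ):ℝ)) ^ 3 := by
      push_cast
      have h1 : (0:ℝ) < a * u + 1 + 0 := by positivity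
      have hpow : (a * u + 1 + (0:ℝ)) ^ 3 < (a * v + 1 + 0) ^ 3 :=
        pow_lt_pow_left₀ (by nlinarith) h1.le (by norm_num)
      have h1d : 1 / (a * v + 1 + (0:ℝ)) ^ 3 < 1 / (a * u + 1 + 0) ^ 3 :=
        one_div_lt_one_div_of_lt (by positivity) hpow
      have hmul := mul_lt_mul_of_neg_left h1d (show -2 * a * ((0:ℝ)+1) < 0 by nlinarith)
      calc -2 * a * ((0:ℝ) + 1) / (a * u + 1 + 0) ^ 3
          = -2 * a * ((0:ℝ)+1) * (1 / (a * u + 1 + 0) ^ 3) := by ring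
        _ < -2 * a * ((0:ℝ)+1) * (1 / (a * v + 1 + 0) ^ 3) := hmul
        _ = -2 * a * ((0:ℝ) + 1) / (a * v + 1 + 0) ^ 3 := by ring
    have hsu' : Summable (fun k : ℕ => -2 * a * ((k : ℝ) + 1) / (a * u + 1 + k) ^ 3) :=
      (hsu.mul_left (-2 * a)).congr fun k => by ring
    have hsv' : Summable (fun k : ℕ => -2 * a * ((k : ℝ) + 1) / (a * v + 1 + k) ^ 3) :=
      (hsv.mul_left (-2 * a)).congr fun k => by ring
    exact Summable.tsum_lt_tsum (i := 0) term strict hsu' hsv'
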